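/- Let Γ be a free ℤ-module of finite rank with a ℤ-valued symmetric bilinear form ⟨·,·⟩, let f, g ∈ Γ_ℝ, let C, K ∈ Γ, let τ be in the complex upper half-plane ℍ and z ∈ ℂ, and let R ⊂ Γ be a complete set of representatives for Γ/2Γ. Assume the family γ ↦ (μ(⟨γ,f⟩) − μ(⟨γ,g⟩)) e^{πi(τ/2)⟨γ,γ⟩} e^{2πi⟨γ, (z/2)·K + (1/2)·C⟩} indexed by γ ∈ Γ is summable. Then Θ^{f,g}_{Γ,0}(τ/2, (z/2)·K + (1/2)·C) = ∑_{D∈R} e^{πi⟨D,C⟩} · Θ^{f,g}_{Γ,D}(2τ, z·K). -/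
import Mathlib
set_option maxHeartbeats 1000000


/-- The bilinear form on `ι → R` associated to an integer matrix `M`. -/
def bilin {ι : Type*} [Fintype ι] {R : Type*} [CommRing R] (M : Matrix ι ι ℤ)
    (v w : ι → R) : R :=
  ∑ i, ∑ j, (M i j : R) * v i * w j

/-- `μ(t) = 1` if `t ≥ 0` and `μ(t) = 0` otherwise (as a complex number). -/
noncomputable def charFun (t : ℝ) : ℂ := if 0 ≤ t then 1 else 0

/-- The theta function `Θ^{f,g}_{Γ,c}(τ,x)` of the lattice `Γ = ι → ℤ` with bilinear
form given by `M`. -/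
noncomputable def latticeTheta {ι : Type*} [Fintype ι] (M : Matrix ι ι ℤ)
    (f g : ι → ℝ) (c : ι → ℤ) (τ : ℂ) (x : ι → ℂ) : ℂ :=
  ∑' γ : ι → ℤ,
    (charFun (bilin M (fun i => (γ i : ℝ) + (c i : ℝ) / 2) f)
      - charFun (bilin M (fun i => (γ i : ℝ) + (c i : ℝ) / 2) g)) *
    Complex.exp (Real.pi * Complex.I * τ *
      bilin M (fun i => (γ i : ℂ) + (c i : ℂ) / 2) (fun i => (γ i : ℂ) + (c i : ℂ) / 2)) *
    Complex.exp (2 * Real.pi * Complex.I *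
      bilin M (fun i => (γ i : ℂ) + (c i : ℂ) / 2) x)

section aux

variable {ι : Type*} [Fintype ι] {S : Type*} [CommRing S] (M : Matrix ι ι ℤ)

lemma bilin_smul_left (a : S) (v w : ι → S) :
    bilin M (fun i => a * v i) w = a * bilin M v w := by
  unfold bilin; rw [Finset.mul_sum]
  refine Finset.sum_congr rfl fun i _ => ?_
  rw [Finset.mul_sum]; exact Finset.sum_congr rfl fun j _ => by ring

lemma bilin_smul_right (a : S) (v w : ι → S) :
    bilin M v (fun i => a * w i) = a * bilin M v w := by
  unfold bilin; rw [Finset.mul_sum]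
  refine Finset.sum_congr rfl fun i _ => ?_
  rw [Finset.mul_sum]; exact Finset.sum_congr rfl fun j _ => by ring

lemma bilin_add_left (v v' w : ι → S) :
    bilin M (fun i => v i + v' i) w = bilin M v w + bilin M v' w := by
  unfold bilin; rw [← Finset.sum_add_distrib]
  refine Finset.sum_congr rfl fun i _ => ?_
  rw [← Finset.sum_add_distrib]; exact Finset.sum_congr rfl fun j _ => by ring

lemma bilin_add_right (v w w' : ι → S) :
    bilin M v (fun i => w i + w' i) = bilin M v w + bilin M v w' := by
  unfold bilin; rw [← Finset.sum_add_distrib]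
  refine Finset.sum_congr rfl fun i _ => ?_
  rw [← Finset.sum_add_distrib]; exact Finset.sum_congr rfl fun j _ => by ring

lemma bilin_intCast (v w : ι → ℤ) :
    bilin M (fun i => ((v i : ℤ) : ℂ)) (fun i => ((w i : ℤ) : ℂ))
      = ((bilin M v w : ℤ) : ℂ) := by
  unfold bilin; push_cast; rfl

lemma charFun_two_mul (t : ℝ) : charFun (2 * t) = charFun t := by
  unfold charFun
  by_cases h : 0 ≤ t
  · rw [if_pos h, if_pos (by linarith)]
  · rw [if_neg h, if_neg (by intro h'; exact h (by linarith))]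

end aux

theorem latticeTheta_half_lattice {ι : Type} [Fintype ι] (M : Matrix ι ι ℤ)
    (hM : M.IsSymm) (f g : ι → ℝ) (C K : ι → ℤ) (τ : ℂ) (hτ : 0 < τ.im) (z : ℂ)
    (R : Finset (ι → ℤ))
    (hR : ∀ γ : ι → ℤ, ∃! D : ι → ℤ, D ∈ R ∧ ∃ h : ι → ℤ, γ = D + 2 • h)
    (hsum : Summable (fun γ : ι → ℤ =>
      (charFun (bilin M (fun i => (γ i : ℝ)) f)
        - charFun (bilin M (fun i => (γ i : ℝ)) g)) *
      Complex.exp (Real.pi * Complex.I * (τ / 2) *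
        bilin M (fun i => (γ i : ℂ)) (fun i => (γ i : ℂ))) *
      Complex.exp (2 * Real.pi * Complex.I *
        bilin M (fun i => (γ i : ℂ)) (fun i => z / 2 * (K i : ℂ) + 1 / 2 * (C i : ℂ))))) :
    latticeTheta M f g 0 (τ / 2) (fun i => z / 2 * (K i : ℂ) + 1 / 2 * (C i : ℂ))
      = ∑ D ∈ R, Complex.exp (Real.pi * Complex.I * ((bilin M D C : ℤ) : ℂ)) *
          latticeTheta M f g D (2 * τ) (fun i => z * (K i : ℂ)) := by
  classical
  set x : ι → ℂ := fun i => z / 2 * (K i : ℂ) + 1 / 2 * (C i : ℂ) with hx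
  set F : (ι → ℤ) → ℂ := fun γ =>
      (charFun (bilin M (fun i => (γ i : ℝ)) f)
        - charFun (bilin M (fun i => (γ i : ℝ)) g)) *
      Complex.exp (Real.pi * Complex.I * (τ / 2) *
        bilin M (fun i => (γ i : ℂ)) (fun i => (γ i : ℂ))) *
      Complex.exp (2 * Real.pi * Complex.I *
        bilin M (fun i => (γ i : ℂ)) x) with hF
  -- the bijection
  have hinj : Function.Injective (fun p : {D // D ∈ R} × (ι → ℤ) => p.1.1 + 2 • p.2) := by
    rintro ⟨⟨D1, hD1⟩, h1⟩ ⟨⟨D2, hD2⟩, h2⟩ heq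
    simp only at heq
    obtain ⟨D, _, huniq⟩ := hR (D1 + 2 • h1)
    have e1 : D1 = D := huniq D1 ⟨hD1, h1, rfl⟩
    have e2 : D2 = D := huniq D2 ⟨hD2, h2, heq⟩
    have hD : D1 = D2 := e1.trans e2.symm
    subst hD
    have : h1 = h2 := by
      funext i
      have := congrFun (add_left_cancel heq) i
      simp only [Pi.smul_apply, two_smul] at this
      omega
    simp [this]
  have hsurj : Function.Surjective (fun p : {D // D ∈ R} × (ι → ℤ) => p.1.1 + 2 • p.2) := by
    intro γ
    obtain ⟨D, ⟨hD, h, hγ⟩, _⟩ := hR γ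
    exact ⟨⟨⟨D, hD⟩, h⟩, hγ.symm⟩
  let e : {D // D ∈ R} × (ι → ℤ) ≃ (ι → ℤ) :=
    Equiv.ofBijective _ ⟨hinj, hsurj⟩
  have he : ∀ p : {D // D ∈ R} × (ι → ℤ), e p = p.1.1 + 2 • p.2 := fun _ => rfl
  -- key pointwise identity
  have key : ∀ (D h : ι → ℤ), F (D + 2 • h) =
      Complex.exp (Real.pi * Complex.I * ((bilin M D C : ℤ) : ℂ)) *
      ((charFun (bilin M (fun i => (h i : ℝ) + (D i : ℝ) / 2) f)
        - charFun (bilin M (fun i => (h i : ℝ) + (D i : ℝ) / 2) g)) *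
      Complex.exp (Real.pi * Complex.I * (2 * τ) *
        bilin M (fun i => (h i : ℂ) + (D i : ℂ) / 2) (fun i => (h i : ℂ) + (D i : ℂ) / 2)) *
      Complex.exp (2 * Real.pi * Complex.I *
        bilin M (fun i => (h i : ℂ) + (D i : ℂ) / 2) (fun i => z * (K i : ℂ)))) := by
    intro D h
    have hr : (fun i => (((D + 2 • h) i : ℤ) : ℝ))
        = fun i => 2 * ((h i : ℝ) + (D i : ℝ) / 2) := by
      funext i; simp [Pi.add_apply, Pi.smul_apply]; push_cast; ring
    have hc : (fun i => (((D + 2 • h) i : ℤ) : ℂ))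
        = fun i => 2 * ((h i : ℂ) + (D i : ℂ) / 2) := by
      funext i; simp [Pi.add_apply, Pi.smul_apply]; push_cast; ring
    have h1f : charFun (bilin M (fun i => (((D + 2 • h) i : ℤ) : ℝ)) f)
        = charFun (bilin M (fun i => (h i : ℝ) + (D i : ℝ) / 2) f) := by
      rw [hr, bilin_smul_left, charFun_two_mul]
    have h1g : charFun (bilin M (fun i => (((D + 2 • h) i : ℤ) : ℝ)) g)
        = charFun (bilin M (fun i => (h i : ℝ) + (D i : ℝ) / 2) g) := by
      rw [hr, bilin_smul_left, charFun_two_mul]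
    have h2 : Complex.exp (Real.pi * Complex.I * (τ / 2) *
          bilin M (fun i => (((D + 2 • h) i : ℤ) : ℂ)) (fun i => (((D + 2 • h) i : ℤ) : ℂ)))
        = Complex.exp (Real.pi * Complex.I * (2 * τ) *
          bilin M (fun i => (h i : ℂ) + (D i : ℂ) / 2)
            (fun i => (h i : ℂ) + (D i : ℂ) / 2)) := by
      rw [hc, bilin_smul_left, bilin_smul_right]
      congr 1
      ring
    have hξC : bilin M (fun i => (h i : ℂ) + (D i : ℂ) / 2) (fun i => ((C i : ℤ) : ℂ))
        = ((bilin M h C : ℤ) : ℂ) + 1 / 2 * ((bilin M D C : ℤ) : ℂ) := by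
      rw [show (fun i => (h i : ℂ) + (D i : ℂ) / 2)
          = fun i => ((h i : ℤ) : ℂ) + (1:ℂ)/2 * ((D i : ℤ) : ℂ) from funext fun i => by ring,
        bilin_add_left, bilin_smul_left, bilin_intCast, bilin_intCast]
    have hxsplit : bilin M (fun i => (h i : ℂ) + (D i : ℂ) / 2) x
        = 1 / 2 * (z * bilin M (fun i => (h i : ℂ) + (D i : ℂ) / 2) (fun i => ((K i : ℤ) : ℂ)))
          + 1 / 2 * ((bilin M h C : ℤ) : ℂ) + 1 / 4 * ((bilin M D C : ℤ) : ℂ) := by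
      rw [show x = fun i => (1:ℂ)/2 * (z * ((K i : ℤ) : ℂ)) + (1:ℂ)/2 * ((C i : ℤ) : ℂ) from
          funext fun i => by rw [hx]; ring,
        bilin_add_right, bilin_smul_right, bilin_smul_right, bilin_smul_right, hξC]
      ring
    have h3 : Complex.exp (2 * Real.pi * Complex.I *
          bilin M (fun i => (((D + 2 • h) i : ℤ) : ℂ)) x)
        = Complex.exp (Real.pi * Complex.I * ((bilin M D C : ℤ) : ℂ)) *
          Complex.exp (2 * Real.pi * Complex.I *
            bilin M (fun i => (h i : ℂ) + (D i : ℂ) / 2) (fun i => z * (K i : ℂ))) := by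
      rw [hc, bilin_smul_left]
      rw [show 2 * (Real.pi : ℂ) * Complex.I *
            (2 * bilin M (fun i => (h i : ℂ) + (D i : ℂ) / 2) x)
          = ((bilin M h C : ℤ) : ℂ) * (2 * Real.pi * Complex.I)
            + (Real.pi * Complex.I * ((bilin M D C : ℤ) : ℂ)
              + 2 * Real.pi * Complex.I *
                (z * bilin M (fun i => (h i : ℂ) + (D i : ℂ) / 2) (fun i => ((K i : ℤ) : ℂ))))
          from by rw [hxsplit]; ring]
      rw [Complex.exp_add, Complex.exp_int_mul_two_pi_mul_I, Complex.exp_add, one_mul,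
        show 2 * (Real.pi : ℂ) * Complex.I *
            (z * bilin M (fun i => (h i : ℂ) + (D i : ℂ) / 2) (fun i => ((K i : ℤ) : ℂ)))
          = 2 * Real.pi * Complex.I *
            bilin M (fun i => (h i : ℂ) + (D i : ℂ) / 2) (fun i => z * ((K i : ℤ) : ℂ))
          from by rw [bilin_smul_right]]
    rw [hF]
    simp only [h1f, h1g, h2, h3]
    ring
  -- main computation
  calc latticeTheta M f g 0 (τ / 2) x
      = ∑' γ : ι → ℤ, F γ := by
        unfold latticeTheta
        refine tsum_congr fun γ => ?_
        simp [hF]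
    _ = ∑' p : {D // D ∈ R} × (ι → ℤ), F (e p) := (e.tsum_eq F).symm
    _ = ∑' D : {D // D ∈ R}, ∑' h : ι → ℤ, F (e (D, h)) := by
        exact Summable.tsum_prod (e.summable_iff.mpr hsum)
    _ = ∑ D : {D // D ∈ R}, Complex.exp (Real.pi * Complex.I * ((bilin M D.1 C : ℤ) : ℂ)) *
          latticeTheta M f g D.1 (2 * τ) (fun i => z * (K i : ℂ)) := by
        rw [tsum_fintype]
        refine Finset.sum_congr rfl fun D _ => ?_
        have h1 : ∀ h : ι → ℤ, F (e (D, h)) =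
            Complex.exp (Real.pi * Complex.I * ((bilin M D.1 C : ℤ) : ℂ)) *
            ((charFun (bilin M (fun i => (h i : ℝ) + (D.1 i : ℝ) / 2) f)
              - charFun (bilin M (fun i => (h i : ℝ) + (D.1 i : ℝ) / 2) g)) *
            Complex.exp (Real.pi * Complex.I * (2 * τ) *
              bilin M (fun i => (h i : ℂ) + (D.1 i : ℂ) / 2)
                (fun i => (h i : ℂ) + (D.1 i : ℂ) / 2)) *
            Complex.exp (2 * Real.pi * Complex.I *
              bilin M (fun i => (h i : ℂ) + (D.1 i : ℂ) / 2) (fun i => z * (K i : ℂ)))) := by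
          intro h
          rw [he (D, h)]
          exact key D.1 h
        rw [tsum_congr h1, tsum_mul_left, latticeTheta]
    _ = ∑ D ∈ R, Complex.exp (Real.pi * Complex.I * ((bilin M D C : ℤ) : ℂ)) *
          latticeTheta M f g D (2 * τ) (fun i => z * (K i : ℂ)) :=
        Finset.sum_coe_sort R (fun D =>
          Complex.exp (Real.pi * Complex.I * ((bilin M D C : ℤ) : ℂ)) *
          latticeTheta M f g D (2 * τ) (fun i => z * (K i : ℂ)))
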